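/- (Approximation guarantee of the LAA algorithm.) Let f be a nonnegative k-submodular function with f(0) = 0 and V ≠ ∅. Let o* be a k-set with c(o*) ≤ B maximizing f among all k-sets of cost at most B, and let (e_m, i_m) ∈ V × {1,…,k} maximize f((e,i)) over all e ∈ V and i ∈ {1,…,k}. Let (e_1,i_1),…,(e_t,i_t) be an LAA run (so that every e_j satisfies c(e_j) ≤ B/2) such that for every e ∈ V with c(e) ≤ B/2 and e ∉ supp(x^t) and every i ∈ {1,…,k}, Δ_{(e,i)}f(x^t) ≤ c(e)·f(x^t)/B. Let T ∈ {0,…,t} be such that c(x_T) ≤ B and c(x_T) ≥ c(x_j) for every j ∈ {0,…,t} with c(x_j) ≤ B, and set x' = x_T. Then max{f((e_m,i_m)), f(x')} ≥ f(o*)/19. -/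

import Mathlib

/-- The meet `x ⊓ y` of two `k`-sets, with components `Xᵢ ∩ Yᵢ`. -/
def sqcap {V : Type*} (x y : V → ℕ) : V → ℕ :=
  fun e => if x e = y e then x e else 0

/-- The join `x ⊔ y` of two `k`-sets, with components
`Zᵢ = (Xᵢ ∪ Yᵢ) \ ⋃_{j ≠ i} (Xⱼ ∪ Yⱼ)`. -/
def sqcup {V : Type*} (x y : V → ℕ) : V → ℕ :=
  fun e =>
    if x e = 0 then y e
    else if y e = 0 then x e
    else if x e = y e then x e else 0

/-- A `k`-set: every element gets a position in `{0, 1, …, k}`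
(`0` meaning unselected). -/
def IsKSet {V : Type*} (k : ℕ) (x : V → ℕ) : Prop := ∀ e, x e ≤ k

/-- `x ⊑ y`: every component of `x` is contained in the corresponding
component of `y`. -/
def KLE {V : Type*} (x y : V → ℕ) : Prop := ∀ e, x e ≠ 0 → y e = x e

/-- The singleton `k`-set `(e, i)`. -/
def singl {V : Type*} [DecidableEq V] (e : V) (i : ℕ) : V → ℕ :=
  fun e' => if e' = e then i else 0

/-- `k`-submodularity: `f x + f y ≥ f (x ⊓ y) + f (x ⊔ y)` for all `k`-sets. -/
def KSubmodular {V : Type*} (k : ℕ) (f : (V → ℕ) → ℝ) : Prop :=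
  ∀ x y : V → ℕ, IsKSet k x → IsKSet k y →
    f x + f y ≥ f (sqcap x y) + f (sqcup x y)

/-- The marginal gain `Δ_{(e,i)} f(x) = f (x ⊔ (e,i)) - f x`. -/
def marg {V : Type*} [DecidableEq V] (f : (V → ℕ) → ℝ) (e : V) (i : ℕ)
    (x : V → ℕ) : ℝ :=
  f (sqcup x (singl e i)) - f x

/-- The cost of a `k`-set: the total cost of its support. -/
noncomputable def cost {V : Type*} [Fintype V] (c : V → ℝ) (x : V → ℕ) : ℝ :=
  ∑ e ∈ Finset.univ.filter (fun e => x e ≠ 0), c e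

/-!
The greedy run `x^t` is compared with the light part `o₁` of `o*` along the chain `o^j` obtained
by overwriting `o₁` with `x^j`: by orthant submodularity and pairwise monotonicity each greedy step
costs `f(o^j)` at most twice its gain, and saturation gives `f(o^t) ≤ 2 f(x^t)`, so
`f(o₁) ≤ 4 f(x^t)`. The heavy part of `o*` has at most one element, hence is worth at most
`f((e_m, i_m))`. Finally `x^t` splits into the prefix `x^{t-T}` and the suffix `x_T`; the gain
condition makes `f` grow by a factor `1 + c(x_T)/B` along the suffix, and maximality of `T` forces
`c(x_T) > B/2` unless `x_T = x^t`, so `f(x^t) ≤ 3 f(x_T)`. Altogether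
`f(o*) ≤ 12 f(x_T) + f((e_m, i_m))`.
-/

open Finset

section Join

variable {V : Type*}

lemma IsKSet.sqcup {k : ℕ} {x y : V → ℕ} (hx : IsKSet k x) (hy : IsKSet k y) :
    IsKSet k (sqcup x y) := by
  intro v
  unfold _root_.sqcup
  split_ifs
  exacts [hy v, hx v, hx v, Nat.zero_le k]

lemma sqcup_apply_of_right_eq_zero {x y : V → ℕ} {v : V} (h : y v = 0) :
    sqcup x y v = x v := by
  simp only [sqcup, h]
  split_ifs <;> omega

lemma sqcup_apply_of_left_eq_zero {x y : V → ℕ} {v : V} (h : x v = 0) :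
    sqcup x y v = y v := by
  simp [sqcup, h]

end Join

section Singleton

variable {V : Type*} [DecidableEq V]

lemma isKSet_singl {k : ℕ} (e : V) {i : ℕ} (hi : i ≤ k) : IsKSet k (singl e i) := by
  intro v
  unfold singl
  split_ifs
  exacts [hi, Nat.zero_le k]

@[simp] lemma singl_apply_self (e : V) (i : ℕ) : singl e i e = i := by simp [singl]

lemma singl_apply_of_ne {e v : V} (i : ℕ) (hv : v ≠ e) : singl e i v = 0 := by
  simp [singl, hv]

lemma sqcup_singl_apply_of_ne (x : V → ℕ) {e v : V} (i : ℕ) (hv : v ≠ e) :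
    sqcup x (singl e i) v = x v :=
  sqcup_apply_of_right_eq_zero (singl_apply_of_ne i hv)

lemma sqcup_singl_apply_self {x : V → ℕ} {e : V} (i : ℕ) (hx : x e = 0) :
    sqcup x (singl e i) e = i := by
  rw [sqcup_apply_of_left_eq_zero hx, singl_apply_self]

lemma marg_zero (f : (V → ℕ) → ℝ) (e : V) (x : V → ℕ) : marg f e 0 x = 0 := by
  have : sqcup x (singl e 0) = x := by
    funext v
    exact sqcup_apply_of_right_eq_zero (by simp [singl])
  simp [marg, this]

lemma eq_singl_of_support_subset {x : V → ℕ} {v : V} (h : ∀ w, x w ≠ 0 → w = v) :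
    x = singl v (x v) := by
  funext w
  by_cases hw : w = v
  · subst hw; simp
  · rw [singl_apply_of_ne _ hw]
    by_contra hxw
    exact hw (h w hxw)

end Singleton

namespace KSubmodular

variable {V : Type*} {k : ℕ} {f : (V → ℕ) → ℝ}

theorem map_sqcup_le_add (hsub : KSubmodular k f) (hf0 : f (fun _ => 0) = 0)
    {x y : V → ℕ} (hx : IsKSet k x) (hy : IsKSet k y) (hdisj : ∀ v, x v = 0 ∨ y v = 0) :
    f (sqcup x y) ≤ f x + f y := by
  have hmeet : sqcap x y = fun _ => 0 := by
    funext v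
    rcases hdisj v with h | h <;> simp only [sqcap, h] <;> split_ifs <;> omega
  have := hsub x y hx hy
  rw [hmeet, hf0] at this
  linarith

variable [DecidableEq V]

theorem marg_le_marg_of_kle (hsub : KSubmodular k f) {x y : V → ℕ} (hx : IsKSet k x)
    (hy : IsKSet k y) (hxy : KLE x y) {e : V} {i : ℕ} (hik : i ≤ k) (hye : y e = 0) :
    marg f e i y ≤ marg f e i x := by
  have hxe : x e = 0 := by
    by_contra h
    exact h (hxy e h ▸ hye)
  have hmeet : sqcap (sqcup x (singl e i)) y = x := by
    funext v
    by_cases hv : v = e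
    · subst hv
      simp only [sqcap, sqcup_singl_apply_self i hxe, hye, hxe]
      split_ifs <;> omega
    · simp only [sqcap, sqcup_singl_apply_of_ne x i hv]
      by_cases hxv : x v = 0
      · simp only [hxv]
        split_ifs <;> omega
      · simp [hxy v hxv]
  have hjoin : sqcup (sqcup x (singl e i)) y = sqcup y (singl e i) := by
    funext v
    by_cases hv : v = e
    · subst hv
      rw [sqcup_apply_of_right_eq_zero hye, sqcup_singl_apply_self i hxe,
        sqcup_singl_apply_self i hye]
    · rw [sqcup_singl_apply_of_ne y i hv]
      by_cases hxv : x v = 0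
      · simp only [sqcup, singl_apply_of_ne i hv, hxv]
        split_ifs <;> omega
      · simp only [sqcup, singl_apply_of_ne i hv, hxy v hxv]
        split_ifs <;> omega
  have := hsub (sqcup x (singl e i)) y (hx.sqcup (isKSet_singl e hik)) hy
  rw [hmeet, hjoin] at this
  unfold marg
  linarith

theorem marg_add_marg_nonneg (hsub : KSubmodular k f) {y : V → ℕ} (hy : IsKSet k y) {e : V}
    {i l : ℕ} (hi : 1 ≤ i) (hik : i ≤ k) (hl : 1 ≤ l) (hlk : l ≤ k) (hil : i ≠ l)
    (hye : y e = 0) :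
    0 ≤ marg f e i y + marg f e l y := by
  have hmeet : sqcap (sqcup y (singl e i)) (sqcup y (singl e l)) = y := by
    funext v
    by_cases hv : v = e
    · subst hv
      simp only [sqcap, sqcup, singl_apply_self, hye]
      split_ifs <;> omega
    · simp [sqcap, sqcup, singl_apply_of_ne _ hv]
      omega
  have hjoin : sqcup (sqcup y (singl e i)) (sqcup y (singl e l)) = y := by
    funext v
    by_cases hv : v = e
    · subst hv
      simp only [sqcup, singl_apply_self, hye]
      split_ifs <;> omega
    · simp only [sqcup, singl_apply_of_ne _ hv]
      split_ifs <;> omega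
  have := hsub (sqcup y (singl e i)) (sqcup y (singl e l))
    (hy.sqcup (isKSet_singl e hik)) (hy.sqcup (isKSet_singl e hlk))
  rw [hmeet, hjoin] at this
  unfold marg
  linarith

end KSubmodular

section Overlay

variable {V : Type*}

-- The paper's `(o ⊔ x) ⊔ x`.
def overlay (x o : V → ℕ) : V → ℕ := fun v => if x v = 0 then o v else x v

def kRestrict (p : V → Prop) [DecidablePred p] (o : V → ℕ) : V → ℕ :=
  fun v => if p v then o v else 0

lemma IsKSet.overlay {k : ℕ} {x o : V → ℕ} (hx : IsKSet k x) (ho : IsKSet k o) :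
    IsKSet k (overlay x o) := by
  intro v
  unfold _root_.overlay
  split_ifs
  exacts [ho v, hx v]

lemma overlay_zero_left (o : V → ℕ) : overlay (fun _ => 0) o = o := by
  funext v
  simp [overlay]

lemma kle_overlay (x o : V → ℕ) : KLE x (overlay x o) := by
  intro v hv
  simp [overlay, hv]

lemma IsKSet.kRestrict {k : ℕ} {o : V → ℕ} (ho : IsKSet k o) (p : V → Prop) [DecidablePred p] :
    IsKSet k (kRestrict p o) := by
  intro v
  unfold _root_.kRestrict
  split_ifs
  exacts [ho v, Nat.zero_le k]

lemma kRestrict_ne_zero_iff {o : V → ℕ} {p : V → Prop} [DecidablePred p] {v : V} :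
    kRestrict p o v ≠ 0 ↔ p v ∧ o v ≠ 0 := by
  unfold kRestrict
  split_ifs with h <;> simp [h]

lemma eq_sqcup_kRestrict (o : V → ℕ) (p : V → Prop) [DecidablePred p] :
    o = sqcup (kRestrict p o) (kRestrict (fun v => ¬ p v) o) := by
  funext v
  simp only [sqcup, kRestrict]
  split_ifs <;> omega

end Overlay

section Cost

variable {V : Type*} [Fintype V] {c : V → ℝ}

lemma sum_le_cost (hc : ∀ v, 0 ≤ c v) {o : V → ℕ} {s : Finset V} (hs : ∀ v ∈ s, o v ≠ 0) :
    ∑ v ∈ s, c v ≤ cost c o :=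
  sum_le_sum_of_subset_of_nonneg (fun v hv => by simpa using hs v hv) (fun v _ _ => hc v)

lemma cost_kRestrict_le (hc : ∀ v, 0 ≤ c v) (o : V → ℕ) (p : V → Prop) [DecidablePred p] :
    cost c (kRestrict p o) ≤ cost c o :=
  sum_le_cost hc fun v hv => by
    simp only [kRestrict, ne_eq, ite_eq_right_iff, Classical.not_imp, mem_filter, mem_univ,
      true_and] at hv
    exact hv.2

end Cost

namespace KSubmodular

variable {V : Type*} {k : ℕ} {f : (V → ℕ) → ℝ}

theorem map_le_map_kRestrict_add (hsub : KSubmodular k f) (hf0 : f (fun _ => 0) = 0)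
    {o : V → ℕ} (ho : IsKSet k o) (p : V → Prop) [DecidablePred p] :
    f o ≤ f (kRestrict p o) + f (kRestrict (fun v => ¬ p v) o) := by
  conv_lhs => rw [eq_sqcup_kRestrict o p]
  refine hsub.map_sqcup_le_add hf0 (ho.kRestrict _) (ho.kRestrict _) fun v => ?_
  by_cases hp : p v <;> simp [kRestrict, hp]

variable [DecidableEq V]

theorem map_overlay_le_of_greedy (hsub : KSubmodular k f) (hk : 2 ≤ k) {x o : V → ℕ}
    (hx : IsKSet k x) (ho : IsKSet k o) {e : V} {p : ℕ} (hxe : x e = 0) (hp : 1 ≤ p)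
    (hpk : p ≤ k)
    (hbest : ∀ l, 1 ≤ l → l ≤ k → f (sqcup x (singl e l)) ≤ f (sqcup x (singl e p))) :
    f (overlay x o) ≤ f (overlay (sqcup x (singl e p)) o) + 2 * marg f e p x := by
  -- `y` is `o^j` with `e` removed; both `o^j` and `o^{j+1}` add `e` to `y`, and the greedy
  -- gain at `x` dominates every gain at `y` (orthant submodularity)
  set y := Function.update (overlay x o) e 0
  have hyK : IsKSet k y := by
    intro v
    by_cases hv : v = e
    · subst hv; simp [y]
    · simpa [y, Function.update_of_ne hv] using (hx.overlay ho) v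
  have hye : y e = 0 := by simp [y]
  have hxy : KLE x y := by
    intro v hv
    have hve : v ≠ e := fun h => hv (h ▸ hxe)
    simp [y, Function.update_of_ne hve, overlay, hv]
  obtain ⟨l, hl, hlk, hlp⟩ : ∃ l, 1 ≤ l ∧ l ≤ k ∧ p ≠ l := by
    rcases Nat.lt_or_ge 1 p with h | h
    · exact ⟨1, le_rfl, by omega, by omega⟩
    · exact ⟨2, by omega, hk, by omega⟩
  have hmarg : ∀ l ≤ k, marg f e l y ≤ marg f e p x := by
    intro l' hl'
    rcases Nat.eq_zero_or_pos l' with rfl | hl1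
    · rw [marg_zero]
      have hpair := hsub.marg_add_marg_nonneg hx hp hpk hl hlk hlp hxe
      have := hbest l hl hlk
      unfold marg at hpair ⊢
      linarith
    · have horth := hsub.marg_le_marg_of_kle hx hyK hxy hl' hye
      have := hbest l' hl1 hl'
      unfold marg at horth ⊢
      linarith
  have hnext : overlay (sqcup x (singl e p)) o = sqcup y (singl e p) := by
    funext v
    by_cases hv : v = e
    · subst hv
      rw [sqcup_singl_apply_self p hye]
      simp [overlay, sqcup_singl_apply_self p hxe]
      omega
    · rw [sqcup_singl_apply_of_ne y p hv]
      simp [y, Function.update_of_ne hv, overlay, sqcup_singl_apply_of_ne x p hv]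
  have hcur : overlay x o = sqcup y (singl e (o e)) := by
    funext v
    by_cases hv : v = e
    · subst hv
      rw [sqcup_singl_apply_self _ hye]
      simp [overlay, hxe]
    · rw [sqcup_singl_apply_of_ne y _ hv]
      simp [y, Function.update_of_ne hv]
  have hpair := hsub.marg_add_marg_nonneg hyK hp hpk hl hlk hlp hye
  have h1 := hmarg l hlk
  have h2 := hmarg (o e) (ho e)
  rw [hcur, hnext]
  unfold marg at hpair h1 h2 ⊢
  linarith


theorem map_overlay_le_of_greedy_run (hsub : KSubmodular k f) (hk : 2 ≤ k) {o : V → ℕ}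
    (ho : IsKSet k o) {t : ℕ} {e : ℕ → V} {pos : ℕ → ℕ} {x : ℕ → V → ℕ}
    (hxK : ∀ j ≤ t, IsKSet k (x j)) (hfresh : ∀ j < t, x j (e j) = 0)
    (hposk : ∀ j < t, 1 ≤ pos j ∧ pos j ≤ k)
    (hxsucc : ∀ j < t, x (j + 1) = sqcup (x j) (singl (e j) (pos j)))
    (hbest : ∀ j < t, ∀ l, 1 ≤ l → l ≤ k →
      f (sqcup (x j) (singl (e j) l)) ≤ f (sqcup (x j) (singl (e j) (pos j)))) :
    f (overlay (x 0) o) ≤ f (overlay (x t) o) + 2 * (f (x t) - f (x 0)) := by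
  suffices h : ∀ j ≤ t, f (overlay (x 0) o) ≤ f (overlay (x j) o) + 2 * (f (x j) - f (x 0)) from
    h t le_rfl
  intro j hj
  induction j with
  | zero => simp
  | succ j ih =>
    have hstep := hsub.map_overlay_le_of_greedy hk (hxK j (by omega)) ho (hfresh j hj)
      (hposk j hj).1 (hposk j hj).2 (hbest j hj)
    simp only [marg, ← hxsucc j hj] at hstep
    linarith [ih (by omega)]

theorem map_overlay_kRestrict_le (hsub : KSubmodular k f) {x o : V → ℕ} (hx : IsKSet k x)
    (ho : IsKSet k o) (s : Finset V) (hs : ∀ v ∈ s, x v = 0) :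
    f (overlay x (kRestrict (· ∈ s) o)) ≤ f x + ∑ v ∈ s, marg f v (o v) x := by
  induction s using Finset.induction_on with
  | empty =>
    have : overlay x (kRestrict (· ∈ (∅ : Finset V)) o) = x := by
      funext v
      by_cases h : x v = 0 <;> simp [overlay, kRestrict, h]
    simp [this]
  | insert a s ha ih =>
    have hxa : x a = 0 := hs a (mem_insert_self a s)
    set g := overlay x (kRestrict (· ∈ s) o)
    have hga : g a = 0 := by simp [g, overlay, kRestrict, hxa, ha]
    have hinsert : overlay x (kRestrict (· ∈ insert a s) o) = sqcup g (singl a (o a)) := by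
      funext v
      by_cases hv : v = a
      · subst hv
        rw [sqcup_singl_apply_self _ hga]
        simp [overlay, kRestrict, hxa]
      · rw [sqcup_singl_apply_of_ne g _ hv]
        simp [g, overlay, kRestrict, hv]
    have horth : marg f a (o a) g ≤ marg f a (o a) x :=
      hsub.marg_le_marg_of_kle hx (hx.overlay (ho.kRestrict _)) (kle_overlay _ _) (ho a) hga
    have hg : f (sqcup g (singl a (o a))) = f g + marg f a (o a) g := by unfold marg; ring
    rw [hinsert, sum_insert ha, hg]
    linarith [ih fun v hv => hs v (mem_insert_of_mem hv)]

variable [Fintype V]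

theorem map_overlay_le_of_saturated (hsub : KSubmodular k f) {x o : V → ℕ} (hx : IsKSet k x)
    (ho : IsKSet k o) {c : V → ℝ} (hc : ∀ v, 0 ≤ c v) {B : ℝ} (hB : 0 ≤ B) (hfx : 0 ≤ f x)
    (hsat : ∀ v, x v = 0 → o v ≠ 0 → marg f v (o v) x ≤ c v * f x / B) :
    f (overlay x o) ≤ f x + cost c o * f x / B := by
  set s := univ.filter fun v => x v = 0 ∧ o v ≠ 0
  have hmem : ∀ v, v ∈ s ↔ x v = 0 ∧ o v ≠ 0 := by simp [s]
  have hrestrict : overlay x (kRestrict (· ∈ s) o) = overlay x o := by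
    funext v
    by_cases hxv : x v = 0 <;> by_cases hov : o v = 0 <;> simp [overlay, kRestrict, hmem, hxv, hov]
  have hsum : ∑ v ∈ s, marg f v (o v) x ≤ cost c o * f x / B :=
    calc ∑ v ∈ s, marg f v (o v) x
        ≤ ∑ v ∈ s, c v * f x / B :=
          sum_le_sum fun v hv => hsat v ((hmem v).1 hv).1 ((hmem v).1 hv).2
      _ = (∑ v ∈ s, c v) * (f x / B) := by simp only [mul_div_assoc, sum_mul]
      _ ≤ cost c o * (f x / B) := by
          gcongr
          exact sum_le_cost hc fun v hv => ((hmem v).1 hv).2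
      _ = cost c o * f x / B := by ring
  have := hsub.map_overlay_kRestrict_le hx ho s fun v hv => ((hmem v).1 hv).1
  rw [hrestrict] at this
  linarith

end KSubmodular

section SelectKSet

variable {V : Type*} [DecidableEq V] (e : ℕ → V) (pos : ℕ → ℕ)

-- A sum rather than a choice of index: when `e` is injective on `s` it has at most one term.
def selectKSet (s : Finset ℕ) : V → ℕ := fun v => ∑ i ∈ s with e i = v, pos i

variable {e pos} {s s' : Finset ℕ}

lemma selectKSet_apply_of_mem (hinj : Set.InjOn e s) {i : ℕ} (hi : i ∈ s) :
    selectKSet e pos s (e i) = pos i :=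
  sum_eq_single_of_mem i (mem_filter.2 ⟨hi, rfl⟩) fun _ hj hji =>
    absurd (hinj (mem_filter.1 hj).1 hi (mem_filter.1 hj).2) hji

lemma selectKSet_apply_of_forall_ne {v : V} (hv : ∀ i ∈ s, e i ≠ v) :
    selectKSet e pos s v = 0 :=
  sum_eq_zero fun i hi => absurd (mem_filter.1 hi).2 (hv i (mem_filter.1 hi).1)

lemma selectKSet_empty : selectKSet e pos ∅ = fun _ => 0 := by
  funext v
  simp [selectKSet]

lemma selectKSet_singleton (a : ℕ) : selectKSet e pos {a} = singl (e a) (pos a) := by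
  funext v
  simp [selectKSet, singl, sum_filter, eq_comm]

lemma selectKSet_union (hinj : Set.InjOn e ↑(s ∪ s')) (hd : Disjoint s s') :
    selectKSet e pos (s ∪ s') = sqcup (selectKSet e pos s) (selectKSet e pos s') := by
  funext v
  by_cases hv : ∃ i ∈ s ∪ s', e i = v
  · obtain ⟨i, hi, rfl⟩ := hv
    rw [selectKSet_apply_of_mem hinj hi]
    have hne : ∀ u ⊆ s ∪ s', i ∉ u → ∀ j ∈ u, e j ≠ e i :=
      fun u hu hiu j hj hji => hiu (hinj (mem_coe.2 (hu hj)) hi hji ▸ hj)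
    rcases mem_union.1 hi with his | his'
    · rw [sqcup_apply_of_right_eq_zero
        (selectKSet_apply_of_forall_ne (hne s' subset_union_right (disjoint_left.1 hd his))),
        selectKSet_apply_of_mem (hinj.mono (by simp)) his]
    · rw [sqcup_apply_of_left_eq_zero
        (selectKSet_apply_of_forall_ne (hne s subset_union_left (disjoint_right.1 hd his'))),
        selectKSet_apply_of_mem (hinj.mono (by simp)) his']
  · push Not at hv
    rw [selectKSet_apply_of_forall_ne hv, sqcup_apply_of_left_eq_zero
      (selectKSet_apply_of_forall_ne fun i hi => hv i (mem_union_left _ hi)),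
      selectKSet_apply_of_forall_ne fun i hi => hv i (mem_union_right _ hi)]

lemma selectKSet_eq_zero_or_eq_zero (hinj : Set.InjOn e ↑(s ∪ s')) (hd : Disjoint s s') (v : V) :
    selectKSet e pos s v = 0 ∨ selectKSet e pos s' v = 0 := by
  by_cases hv : ∃ i ∈ s, e i = v
  · obtain ⟨i, hi, rfl⟩ := hv
    right
    exact selectKSet_apply_of_forall_ne fun j hj hji =>
      disjoint_left.1 hd hi (hinj (mem_union_right _ hj) (mem_union_left _ hi) hji ▸ hj)
  · push Not at hv
    exact Or.inl (selectKSet_apply_of_forall_ne hv)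

lemma isKSet_selectKSet {k : ℕ} (hinj : Set.InjOn e s) (hpos : ∀ i ∈ s, pos i ≤ k) :
    IsKSet k (selectKSet e pos s) := by
  intro v
  by_cases hv : ∃ i ∈ s, e i = v
  · obtain ⟨i, hi, rfl⟩ := hv
    rw [selectKSet_apply_of_mem hinj hi]
    exact hpos i hi
  · push Not at hv
    simp [selectKSet_apply_of_forall_ne hv]

lemma cost_selectKSet [Fintype V] (c : V → ℝ) (hinj : Set.InjOn e s)
    (hpos : ∀ i ∈ s, pos i ≠ 0) : cost c (selectKSet e pos s) = ∑ i ∈ s, c (e i) := by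
  have hsupp : univ.filter (fun v => selectKSet e pos s v ≠ 0) = s.image e := by
    ext v
    simp only [mem_filter, mem_univ, true_and, mem_image]
    constructor
    · intro hv
      by_contra hno
      push Not at hno
      exact hv (selectKSet_apply_of_forall_ne hno)
    · rintro ⟨i, hi, rfl⟩
      rw [selectKSet_apply_of_mem hinj hi]
      exact hpos i hi
  rw [cost, hsupp, sum_image hinj]

end SelectKSet

theorem mul_add_sum_le_of_gain {F w : ℕ → ℝ} {B : ℝ} (hB : 0 < B) {a b : ℕ} (hab : a ≤ b)
    (hF : ∀ j ∈ Ico a b, 0 ≤ F j) (hw : ∀ j ∈ Ico a b, 0 ≤ w j)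
    (hgain : ∀ j ∈ Ico a b, w j * F j / B ≤ F (j + 1) - F j) :
    F a * (B + ∑ j ∈ Ico a b, w j) ≤ F b * B := by
  induction b, hab using Nat.le_induction with
  | base => simp
  | succ b hab ih =>
    have hmem : ∀ j ∈ Ico a b, j ∈ Ico a (b + 1) := fun j hj => by
      simp only [mem_Ico] at hj ⊢; omega
    have hb : b ∈ Ico a (b + 1) := by simp [hab]
    have ih := ih (fun j hj => hF j (hmem j hj)) (fun j hj => hw j (hmem j hj))
      (fun j hj => hgain j (hmem j hj))
    have hFa : 0 ≤ F a := hF a (by simp; omega)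
    have hS : 0 ≤ ∑ j ∈ Ico a b, w j := sum_nonneg fun j hj => hw j (hmem j hj)
    have hmono : F a ≤ F b := le_of_mul_le_mul_right (by nlinarith) hB
    have hstep := hgain b hb
    rw [div_le_iff₀ hB] at hstep
    rw [sum_Ico_succ_top hab]
    nlinarith [mul_le_mul_of_nonneg_right hmono (hw b hb)]

section LAA

variable {V : Type*} [DecidableEq V] {t : ℕ} {e : ℕ → V} {pos : ℕ → ℕ}

theorem eq_selectKSet_range {x : ℕ → V → ℕ} (hinj : Set.InjOn e (range t))
    (hx0 : x 0 = fun _ => 0) (hxsucc : ∀ j < t, x (j + 1) = sqcup (x j) (singl (e j) (pos j))) :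
    ∀ j ≤ t, x j = selectKSet e pos (range j) := by
  intro j hj
  induction j with
  | zero => rw [hx0, range_zero, selectKSet_empty]
  | succ j ih =>
    have hrange : range (j + 1) = range j ∪ {j} := by ext; simp; omega
    rw [hxsucc j hj, ih (by omega), ← selectKSet_singleton, hrange,
      selectKSet_union (hinj.mono (by rw [← hrange]; exact coe_subset.2 (range_subset_range.2 hj)))
        (by simp)]

theorem eq_selectKSet_Ico {xs : ℕ → V → ℕ} (hinj : Set.InjOn e (range t))
    (hxs0 : xs 0 = fun _ => 0)
    (hxssucc : ∀ j < t, xs (j + 1) = sqcup (xs j) (singl (e (t - 1 - j)) (pos (t - 1 - j)))) :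
    ∀ j ≤ t, xs j = selectKSet e pos (Ico (t - j) t) := by
  intro j hj
  induction j with
  | zero => rw [hxs0, Nat.sub_zero, Ico_self, selectKSet_empty]
  | succ j ih =>
    have hIco : Ico (t - (j + 1)) t = Ico (t - j) t ∪ {t - 1 - j} := by ext; simp; omega
    rw [hxssucc j hj, ih (by omega), ← selectKSet_singleton, hIco,
      selectKSet_union (hinj.mono (by
        rw [← hIco, range_eq_Ico]; exact coe_subset.2 (Ico_subset_Ico (by omega) le_rfl)))
        (by simp; omega)]

end LAA

section LAABounds

variable {V : Type*} [Fintype V] [DecidableEq V] {k : ℕ} {f : (V → ℕ) → ℝ} {c : V → ℝ} {B : ℝ}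
  {t : ℕ} {e : ℕ → V} {pos : ℕ → ℕ}

theorem map_run_le_three_mul_map_suffix (hsub : KSubmodular k f) (hf0 : f (fun _ => 0) = 0)
    (hnn : ∀ x : V → ℕ, IsKSet k x → 0 ≤ f x) (hc : ∀ v, 0 < c v) (hB : 0 < B)
    (hinj : Set.InjOn e (range t)) (hposk : ∀ j < t, 1 ≤ pos j ∧ pos j ≤ k)
    {x xs : ℕ → V → ℕ} (hxK : ∀ j ≤ t, IsKSet k (x j))
    (hx : ∀ j ≤ t, x j = selectKSet e pos (range j))
    (hxs : ∀ j ≤ t, xs j = selectKSet e pos (Ico (t - j) t))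
    (hxsucc : ∀ j < t, x (j + 1) = sqcup (x j) (singl (e j) (pos j)))
    (hgain : ∀ j < t, c (e j) * f (x j) / B ≤ marg f (e j) (pos j) (x j))
    (hlight : ∀ j < t, c (e j) ≤ B / 2) {T : ℕ} (hTt : T ≤ t)
    (hTmax : ∀ j ≤ t, cost c (xs j) ≤ B → cost c (xs j) ≤ cost c (xs T)) :
    f (x t) ≤ 3 * f (xs T) := by
  have hinjIco : ∀ j, Set.InjOn e (Ico (t - j) t) := fun j =>
    hinj.mono (coe_subset.2 fun i hi => mem_range.2 (mem_Ico.1 hi).2)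
  have hxsK : IsKSet k (xs T) := hxs T hTt ▸
    isKSet_selectKSet (hinjIco T) fun i hi => (hposk i (mem_Ico.1 hi).2).2
  have hcost : ∀ j ≤ t, cost c (xs j) = ∑ i ∈ Ico (t - j) t, c (e i) := fun j hj => by
    rw [hxs j hj, cost_selectKSet c (hinjIco j)
      fun i hi => Nat.one_le_iff_ne_zero.1 (hposk i (mem_Ico.1 hi).2).1]
  have hsplit : f (x t) ≤ f (x (t - T)) + f (xs T) := by
    have hunion : range t = range (t - T) ∪ Ico (t - T) t := by ext; simp; omega
    have hdisj : Disjoint (range (t - T)) (Ico (t - T) t) := by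
      rw [disjoint_left]; intro i; simp; omega
    have hdecomp : x t = sqcup (x (t - T)) (xs T) := by
      rw [hx t le_rfl, hx (t - T) (by omega), hxs T hTt, hunion,
        selectKSet_union (hunion ▸ hinj) hdisj]
    rw [hdecomp]
    refine hsub.map_sqcup_le_add hf0 (hxK (t - T) (by omega)) hxsK fun v => ?_
    rw [hx (t - T) (by omega), hxs T hTt]
    exact selectKSet_eq_zero_or_eq_zero (hunion ▸ hinj) hdisj v
  have hgrow : f (x (t - T)) * (B + cost c (xs T)) ≤ f (x t) * B := by
    rw [hcost T hTt]
    refine mul_add_sum_le_of_gain hB (by omega) (fun j hj => hnn _ (hxK j (mem_Ico.1 hj).2.le))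
      (fun j _ => (hc _).le) fun j hj => ?_
    have hjt : j < t := (mem_Ico.1 hj).2
    simpa [marg, ← hxsucc j hjt] using hgain j hjt
  -- `T` is maximal, so a cheap suffix `x_T` could still be extended by the light element before it
  have hcases : B / 2 < cost c (xs T) ∨ T = t := by
    by_contra h
    push Not at h
    have hstep : cost c (xs (T + 1)) = c (e (t - 1 - T)) + cost c (xs T) := by
      rw [hcost (T + 1) (by omega), hcost T hTt, sum_eq_sum_Ico_succ_bot (by omega),
        show t - (T + 1) + 1 = t - T by omega, show t - (T + 1) = t - 1 - T by omega]
    have := hTmax (T + 1) (by omega) (by linarith [hlight (t - 1 - T) (by omega)])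
    linarith [hc (e (t - 1 - T))]
  have hfP : 0 ≤ f (x (t - T)) := hnn _ (hxK _ (by omega))
  rcases hcases with hT | rfl
  · -- `f(x^{t-T}) ≤ f(x^t) B / (B + c(x_T)) < 2 f(x^t) / 3`
    nlinarith [hnn _ (hxK t le_rfl)]
  · rw [Nat.sub_self, hx 0 (Nat.zero_le _), range_zero, selectKSet_empty, hf0] at hsplit
    linarith [hnn _ hxsK]

theorem map_light_le_four_mul_map_run (hsub : KSubmodular k f) (hk : 2 ≤ k)
    (hf0 : f (fun _ => 0) = 0) (hc : ∀ v, 0 ≤ c v) (hB : 0 < B) {o : V → ℕ} (ho : IsKSet k o) (hoB : cost c o ≤ B)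
    {x : ℕ → V → ℕ} (hx0 : x 0 = fun _ => 0) (hxK : ∀ j ≤ t, IsKSet k (x j))
    (hfresh : ∀ j < t, x j (e j) = 0) (hposk : ∀ j < t, 1 ≤ pos j ∧ pos j ≤ k)
    (hxsucc : ∀ j < t, x (j + 1) = sqcup (x j) (singl (e j) (pos j)))
    (hbest : ∀ j < t, ∀ l, 1 ≤ l → l ≤ k →
      f (sqcup (x j) (singl (e j) l)) ≤ f (sqcup (x j) (singl (e j) (pos j))))
    (hfx : 0 ≤ f (x t))
    (hsat : ∀ e', c e' ≤ B / 2 → x t e' = 0 → ∀ i, 1 ≤ i → i ≤ k →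
      marg f e' i (x t) ≤ c e' * f (x t) / B) :
    f (kRestrict (fun v => c v ≤ B / 2) o) ≤ 4 * f (x t) := by
  set light := kRestrict (fun v => c v ≤ B / 2) o
  have hlightK : IsKSet k light := ho.kRestrict _
  have hrun := hsub.map_overlay_le_of_greedy_run hk hlightK hxK hfresh hposk hxsucc hbest
  rw [hx0, overlay_zero_left, hf0] at hrun
  have hsatur := hsub.map_overlay_le_of_saturated (hxK t le_rfl) hlightK hc hB.le hfx
    fun v hxv hv => by
      obtain ⟨hcv, hov⟩ := kRestrict_ne_zero_iff.1 hv
      simp only [light, kRestrict, if_pos hcv]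
      exact hsat v hcv hxv _ (Nat.one_le_iff_ne_zero.2 hov) (ho v)
  have hcostB : cost c light * f (x t) / B ≤ f (x t) := by
    rw [div_le_iff₀ hB]
    nlinarith [cost_kRestrict_le hc o fun v => c v ≤ B / 2]
  linarith

theorem map_heavy_le_of_map_singl_le (hf0 : f (fun _ => 0) = 0) (hc : ∀ v, 0 < c v) {o : V → ℕ}
    (ho : IsKSet k o) (hoB : cost c o ≤ B) {M : ℝ} (hM : 0 ≤ M)
    (hsingl : ∀ v i, 1 ≤ i → i ≤ k → f (singl v i) ≤ M) :
    f (kRestrict (fun v => ¬ c v ≤ B / 2) o) ≤ M := by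
  set heavy := kRestrict (fun v => ¬ c v ≤ B / 2) o
  by_cases hex : ∃ v, heavy v ≠ 0
  · obtain ⟨v, hv⟩ := hex
    -- two heavy elements would already exceed the budget
    have hsupp : ∀ w, heavy w ≠ 0 → w = v := by
      intro w hw
      by_contra hwv
      obtain ⟨hcv, hov⟩ := kRestrict_ne_zero_iff.1 hv
      obtain ⟨hcw, how⟩ := kRestrict_ne_zero_iff.1 hw
      have := sum_le_cost (s := {w, v}) (fun u => (hc u).le) (o := o) (by simp [hov, how])
      rw [sum_pair hwv] at this
      linarith
    rw [eq_singl_of_support_subset hsupp]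
    exact hsingl v _ (Nat.one_le_iff_ne_zero.2 hv) ((ho.kRestrict _) v)
  · push Not at hex
    rw [show heavy = fun _ => 0 from funext hex, hf0]
    exact hM

end LAABounds

theorem stmt5_general {V : Type*} [Fintype V] [DecidableEq V]
    (k : ℕ) (hk : 2 ≤ k)
    (f : (V → ℕ) → ℝ)
    (hsub : KSubmodular k f)
    (hnn : ∀ x : V → ℕ, IsKSet k x → 0 ≤ f x)
    (hf0 : f (fun _ => 0) = 0)
    (c : V → ℝ) (hc : ∀ e, 0 < c e) (B : ℝ) (hB : 0 < B)
    (ostar : V → ℕ) (hostar : IsKSet k ostar) (hostarB : cost c ostar ≤ B)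
    (em : V) (im : ℕ) (him2 : im ≤ k)
    (hem : ∀ (e' : V) (i : ℕ), 1 ≤ i → i ≤ k → f (singl e' i) ≤ f (singl em im))
    (t : ℕ) (e : ℕ → V) (pos : ℕ → ℕ)
    (hdist : ∀ j₁ j₂, j₁ < t → j₂ < t → e j₁ = e j₂ → j₁ = j₂)
    (hposk : ∀ j < t, 1 ≤ pos j ∧ pos j ≤ k)
    (x : ℕ → (V → ℕ))
    (hx0 : x 0 = fun _ => 0)
    (hxsucc : ∀ j < t, x (j + 1) = sqcup (x j) (singl (e j) (pos j)))
    (hbest : ∀ j < t, ∀ l, 1 ≤ l → l ≤ k →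
      f (sqcup (x j) (singl (e j) l)) ≤ f (sqcup (x j) (singl (e j) (pos j))))
    (hgain : ∀ j < t, c (e j) * f (x j) / B ≤ marg f (e j) (pos j) (x j))
    (hlight : ∀ j < t, c (e j) ≤ B / 2)
    (hsat : ∀ e', c e' ≤ B / 2 → x t e' = 0 → ∀ i, 1 ≤ i → i ≤ k →
      marg f e' i (x t) ≤ c e' * f (x t) / B)
    (xs : ℕ → (V → ℕ))
    (hxs0 : xs 0 = fun _ => 0)
    (hxssucc : ∀ j < t, xs (j + 1) = sqcup (xs j) (singl (e (t - 1 - j)) (pos (t - 1 - j))))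
    (T : ℕ) (hTt : T ≤ t)
    (hTmax : ∀ j ≤ t, cost c (xs j) ≤ B → cost c (xs j) ≤ cost c (xs T))
    : f ostar / 19 ≤ max (f (singl em im)) (f (xs T)) := by
  have hinj : Set.InjOn e (range t) := fun a ha b hb =>
    hdist a b (mem_range.1 ha) (mem_range.1 hb)
  have hx := eq_selectKSet_range hinj hx0 hxsucc
  have hxK : ∀ j ≤ t, IsKSet k (x j) := fun j hj => hx j hj ▸
    isKSet_selectKSet (hinj.mono (coe_subset.2 (range_subset_range.2 hj)))
      fun i hi => (hposk i ((mem_range.1 hi).trans_le hj)).2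
  have hfresh : ∀ j < t, x j (e j) = 0 := fun j hj => hx j hj.le ▸
    selectKSet_apply_of_forall_ne fun i hi hij =>
      (mem_range.1 hi).ne (hdist i j ((mem_range.1 hi).trans hj) hj hij)
  have hsuffix := map_run_le_three_mul_map_suffix hsub hf0 hnn hc hB hinj hposk hxK hx
    (eq_selectKSet_Ico hinj hxs0 hxssucc) hxsucc hgain hlight hTt hTmax
  have hlightPart := map_light_le_four_mul_map_run hsub hk hf0 (fun v => (hc v).le) hB hostar
    hostarB hx0 hxK hfresh hposk hxsucc hbest (hnn _ (hxK t le_rfl)) hsat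
  have hm := hnn _ (isKSet_singl em him2)
  have hheavyPart := map_heavy_le_of_map_singl_le hf0 hc hostar hostarB hm hem
  have hsplit := hsub.map_le_map_kRestrict_add hf0 hostar fun v => c v ≤ B / 2
  linarith [le_max_left (f (singl em im)) (f (xs T)), le_max_right (f (singl em im)) (f (xs T))]

/-- approximation guarantee of `LAA`: with `o*` an optimal
feasible `k`-set, `(e_m, i_m)` a best singleton, and `x' = x_T` the
maximal-cost feasible suffix of an LAA run that saturates all light elements,
`max {f((e_m,i_m)), f(x')} ≥ f(o*)/19`. -/
theorem stmt5 {V : Type*} [Fintype V] [DecidableEq V] [Nonempty V]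
    (k : ℕ) (hk : 2 ≤ k)
    (f : (V → ℕ) → ℝ)
    (hsub : KSubmodular k f)
    (hnn : ∀ x : V → ℕ, IsKSet k x → 0 ≤ f x)
    (hf0 : f (fun _ => 0) = 0)
    (c : V → ℝ) (hc : ∀ e, 0 < c e) (B : ℝ) (hB : 0 < B)
    (ostar : V → ℕ) (hostar : IsKSet k ostar) (hostarB : cost c ostar ≤ B)
    (hopt : ∀ y : V → ℕ, IsKSet k y → cost c y ≤ B → f y ≤ f ostar)
    (em : V) (im : ℕ) (him1 : 1 ≤ im) (him2 : im ≤ k)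
    (hem : ∀ (e' : V) (i : ℕ), 1 ≤ i → i ≤ k → f (singl e' i) ≤ f (singl em im))
    (t : ℕ) (e : ℕ → V) (pos : ℕ → ℕ)
    (hdist : ∀ j₁ j₂, j₁ < t → j₂ < t → e j₁ = e j₂ → j₁ = j₂)
    (hposk : ∀ j < t, 1 ≤ pos j ∧ pos j ≤ k)
    (x : ℕ → (V → ℕ))
    (hx0 : x 0 = fun _ => 0)
    (hxsucc : ∀ j < t, x (j + 1) = sqcup (x j) (singl (e j) (pos j)))
    (hbest : ∀ j < t, ∀ l, 1 ≤ l → l ≤ k →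
      f (sqcup (x j) (singl (e j) l)) ≤ f (sqcup (x j) (singl (e j) (pos j))))
    (hgain : ∀ j < t, c (e j) * f (x j) / B ≤ marg f (e j) (pos j) (x j))
    (hlight : ∀ j < t, c (e j) ≤ B / 2)
    (hsat : ∀ e', c e' ≤ B / 2 → x t e' = 0 → ∀ i, 1 ≤ i → i ≤ k →
      marg f e' i (x t) ≤ c e' * f (x t) / B)
    (xs : ℕ → (V → ℕ))
    (hxs0 : xs 0 = fun _ => 0)
    (hxssucc : ∀ j < t, xs (j + 1) = sqcup (xs j) (singl (e (t - 1 - j)) (pos (t - 1 - j))))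
    (T : ℕ) (hTt : T ≤ t) (hTB : cost c (xs T) ≤ B)
    (hTmax : ∀ j ≤ t, cost c (xs j) ≤ B → cost c (xs j) ≤ cost c (xs T))
    : f ostar / 19 ≤ max (f (singl em im)) (f (xs T)) :=
  stmt5_general k hk f hsub hnn hf0 c hc B hB ostar hostar hostarB em im him2 hem t e pos hdist
    hposk x hx0 hxsucc hbest hgain hlight hsat xs hxs0 hxssucc T hTt hTmax
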